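/- Let α ∈ 𝕋_s^× be a unit of the Tate algebra and let x ∈ ℂ_∞^× satisfy ‖x − α‖_∞ < ‖α‖_∞. Then the infinite product ∏_{i=0}^∞ x^{q^i}/τ^i(α) converges in 𝕋_s^×, and if γ ∈ ℂ_∞ satisfies γ^{q−1} = x, the element ω(α) := γ · ∏_{i=0}^∞ x^{q^i}/τ^i(α) satisfies the functional equation τ(ω(α)) = α · ω(α). -/

import Mathlib

open Filter

noncomputable section

/-- Membership in the Tate algebra `𝕋_s` over `K`: the coefficients tend to `0`
(for every `ε > 0` only finitely many coefficients have norm `≥ ε`). -/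
def IsTate (K : Type) [NontriviallyNormedField K] (s : ℕ)
    (f : MvPowerSeries (Fin s) K) : Prop :=
  ∀ ε : ℝ, 0 < ε → {ν : Fin s →₀ ℕ | ε ≤ ‖MvPowerSeries.coeff (σ := Fin s) (R := K) ν f‖}.Finite

/-- The Gauss norm `‖f‖_∞ = sup_ν |a_ν|` on the Tate algebra. -/
def gaussNorm (K : Type) [NontriviallyNormedField K] (s : ℕ)
    (f : MvPowerSeries (Fin s) K) : ℝ :=
  ⨆ ν : Fin s →₀ ℕ, ‖MvPowerSeries.coeff (σ := Fin s) (R := K) ν f‖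

/-- The coefficient-wise twist of a power series induced by a ring endomorphism of `K`. -/
def twPS (K : Type) [NontriviallyNormedField K] (s : ℕ) (τK : K →+* K) :
    MvPowerSeries (Fin s) K →+* MvPowerSeries (Fin s) K :=
  MvPowerSeries.map (σ := Fin s) τK

/-!
Since `‖x - α‖_∞ < ‖α‖_∞`, the ultrametric inequality gives `‖x‖ = ‖α‖_∞`, so `u = x/α = C x * β`
and its inverse `α/x` both lie within `θ = ‖x - α‖_∞ / ‖x‖ < 1` of `1`. The `q`-th power Frobenius
raises such distances to the `q`-th power, so the factor `τ^N(u)` is within `θ ^ q ^ N` of `1`, the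
partial products `∏_{i<N} τ^i(u)` converge geometrically to some `w`, and those of `α/x` converge
to `w⁻¹`. The functional equation is the limit of `∏_{i≤N} τ^i(u) = u · τ(∏_{i<N} τ^i(u))`,
together with `γ^q = γ x`.
-/

open Topology

namespace MvPowerSeries

variable {σ K : Type*} [NormedField K]

/-- `‖f‖_∞ ≤ c`, stated coefficientwise: unlike `gaussNorm`, which is `0` on unbounded series,
this needs no boundedness hypothesis. -/
def CoeffNormLE (f : MvPowerSeries σ K) (c : ℝ) : Prop :=
  ∀ ν, ‖coeff ν f‖ ≤ c

theorem coeffNormLE_zero {c : ℝ} (hc : 0 ≤ c) : CoeffNormLE (0 : MvPowerSeries σ K) c :=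
  fun ν => by simpa using hc

theorem coeffNormLE_C (c : K) : CoeffNormLE (C c : MvPowerSeries σ K) ‖c‖ := by
  classical
  intro ν
  rw [coeff_C]
  split_ifs <;> simp

theorem coeffNormLE_one : CoeffNormLE (1 : MvPowerSeries σ K) 1 := by
  simpa using coeffNormLE_C (σ := σ) (1 : K)

namespace CoeffNormLE

variable {f g : MvPowerSeries σ K} {a b : ℝ}

theorem nonneg (hf : CoeffNormLE f a) : 0 ≤ a := (norm_nonneg _).trans (hf 0)

theorem mono (hf : CoeffNormLE f a) (hab : a ≤ b) : CoeffNormLE f b :=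
  fun ν => (hf ν).trans hab

theorem neg (hf : CoeffNormLE f a) : CoeffNormLE (-f) a :=
  fun ν => by simpa using hf ν

theorem sub_comm (hf : CoeffNormLE (f - g) a) : CoeffNormLE (g - f) a := by
  simpa using hf.neg

variable [IsUltrametricDist K]

theorem add (hf : CoeffNormLE f a) (hg : CoeffNormLE g b) : CoeffNormLE (f + g) (max a b) :=
  fun ν => by
    rw [map_add]
    exact (IsUltrametricDist.norm_add_le_max _ _).trans (max_le_max (hf ν) (hg ν))

theorem sub (hf : CoeffNormLE f a) (hg : CoeffNormLE g b) : CoeffNormLE (f - g) (max a b) := by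
  simpa [sub_eq_add_neg] using hf.add hg.neg

theorem mul (hf : CoeffNormLE f a) (hg : CoeffNormLE g b) : CoeffNormLE (f * g) (a * b) := by
  classical
  intro ν
  rw [coeff_mul]
  refine IsUltrametricDist.norm_sum_le_of_forall_le_of_nonneg
    (mul_nonneg hf.nonneg hg.nonneg) fun p _ => ?_
  rw [norm_mul]
  exact mul_le_mul (hf p.1) (hg p.2) (norm_nonneg _) hf.nonneg

theorem le_one_of_sub_one (hf : CoeffNormLE (f - 1) a) (ha : a ≤ 1) : CoeffNormLE f 1 := by
  simpa [ha] using hf.add coeffNormLE_one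

end CoeffNormLE

theorem coeffNormLE_sub_of_forall_succ [IsUltrametricDist K] {P : ℕ → MvPowerSeries σ K}
    {ε : ℕ → ℝ} (hε : Antitone ε) (h : ∀ n, CoeffNormLE (P (n + 1) - P n) (ε n))
    {N m : ℕ} (hNm : N ≤ m) : CoeffNormLE (P m - P N) (ε N) := by
  induction m, hNm using Nat.le_induction with
  | base => simpa using coeffNormLE_zero (h N).nonneg
  | succ m hNm ih =>
    simpa [hε hNm] using (h m).add ih

theorem exists_coeffNormLE_sub_of_cauchy [CompleteSpace K] {P : ℕ → MvPowerSeries σ K}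
    {ε : ℕ → ℝ} (hε : Tendsto ε atTop (𝓝 0))
    (hP : ∀ N m, N ≤ m → CoeffNormLE (P m - P N) (ε N)) :
    ∃ w, ∀ N, CoeffNormLE (P N - w) (ε N) := by
  have hcauchy (ν : σ →₀ ℕ) : CauchySeq fun N => coeff ν (P N) :=
    Metric.cauchySeq_iff'.2 fun δ hδ =>
      (hε.eventually (gt_mem_nhds hδ)).exists.imp fun N hN m hm => by
        rw [dist_eq_norm, ← map_sub]
        exact (hP N m hm ν).trans_lt hN
  obtain ⟨w, hw⟩ : ∃ w : MvPowerSeries σ K,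
      ∀ ν, Tendsto (fun N => coeff ν (P N)) atTop (𝓝 (coeff ν w)) :=
    ⟨fun ν => limUnder atTop fun N => coeff ν (P N), fun ν => (hcauchy ν).tendsto_limUnder⟩
  refine ⟨w, fun N ν => ?_⟩
  rw [map_sub]
  refine le_of_tendsto (((hw ν).const_sub _).norm) ?_
  filter_upwards [eventually_ge_atTop N] with m hm
  rw [← norm_neg, neg_sub, ← map_sub]
  exact hP N m hm ν

theorem eq_of_forall_coeffNormLE_pow {f g : MvPowerSeries σ K} {θ : ℝ} (hθ : θ < 1)
    (h : ∀ N, CoeffNormLE (f - g) (θ ^ N)) : f = g := by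
  have hθ0 : 0 ≤ θ := by simpa using (h 1).nonneg
  refine sub_eq_zero.1 (ext fun ν => ?_)
  rw [map_zero, ← norm_le_zero_iff]
  exact ge_of_tendsto' (tendsto_pow_atTop_nhds_zero_of_lt_one hθ0 hθ) fun N => h N ν

end MvPowerSeries

section Tate

open MvPowerSeries (C coeff coeff_C coeff_mul CoeffNormLE coeffNormLE_C)
open Pointwise

variable {K : Type} [NontriviallyNormedField K] {s : ℕ} {f g : MvPowerSeries (Fin s) K}

theorem isTate_C (c : K) : IsTate K s (C c) := by
  classical
  intro ε hε
  refine (Set.finite_singleton 0).subset fun ν hν => ?_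
  by_contra hν0
  have hν : ε ≤ ‖coeff ν (C c)‖ := hν
  rw [coeff_C, if_neg (by simpa using hν0), norm_zero] at hν
  exact hν.not_gt hε

theorem isTate_one : IsTate K s 1 := by
  simpa using isTate_C (s := s) (1 : K)

theorem IsTate.neg (hf : IsTate K s f) : IsTate K s (-f) := by
  simpa [IsTate] using hf

theorem IsTate.bddAbove (hf : IsTate K s f) :
    BddAbove (Set.range fun ν => ‖coeff ν f‖) := by
  obtain ⟨c, hc⟩ := ((hf 1 one_pos).image fun ν => ‖coeff ν f‖).bddAbove
  refine ⟨max c 1, ?_⟩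
  rintro _ ⟨ν, rfl⟩
  by_cases hν : 1 ≤ ‖coeff ν f‖
  · exact le_max_of_le_left (hc ⟨ν, hν, rfl⟩)
  · exact le_max_of_le_right (not_le.1 hν).le

theorem IsTate.coeffNormLE_gaussNorm (hf : IsTate K s f) : CoeffNormLE f (gaussNorm K s f) :=
  fun ν => le_ciSup hf.bddAbove ν

theorem gaussNorm_nonneg (f : MvPowerSeries (Fin s) K) : 0 ≤ gaussNorm K s f :=
  Real.iSup_nonneg fun _ => norm_nonneg _

theorem gaussNorm_neg (f : MvPowerSeries (Fin s) K) : gaussNorm K s (-f) = gaussNorm K s f := by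
  simp [gaussNorm]

theorem gaussNorm_le {c : ℝ} (hf : CoeffNormLE f c) : gaussNorm K s f ≤ c :=
  ciSup_le hf

theorem gaussNorm_C (c : K) : gaussNorm K s (C c) = ‖c‖ :=
  (gaussNorm_le (coeffNormLE_C c)).antisymm <| by
    simpa using (isTate_C (s := s) c).coeffNormLE_gaussNorm 0

theorem IsTate.of_forall_exists_coeffNormLE_sub
    (h : ∀ ε > 0, ∃ g, IsTate K s g ∧ CoeffNormLE (f - g) ε) : IsTate K s f := by
  intro ε hε
  obtain ⟨g, hg, hfg⟩ := h (ε / 2) (half_pos hε)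
  refine (hg (ε / 2) (half_pos hε)).subset fun ν hν => ?_
  have hν : ε ≤ ‖coeff ν f‖ := hν
  have := norm_le_insert' (coeff ν f) (coeff ν g)
  rw [← map_sub] at this
  change ε / 2 ≤ ‖coeff ν g‖
  linarith [hfg ν]

variable [IsUltrametricDist K]

theorem IsTate.add (hf : IsTate K s f) (hg : IsTate K s g) : IsTate K s (f + g) := by
  intro ε hε
  refine ((hf ε hε).union (hg ε hε)).subset fun ν hν => ?_
  have hν : ε ≤ ‖coeff ν f + coeff ν g‖ := by simpa using hν
  exact le_max_iff.1 (hν.trans (IsUltrametricDist.norm_add_le_max _ _))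

theorem IsTate.sub (hf : IsTate K s f) (hg : IsTate K s g) : IsTate K s (f - g) := by
  simpa [sub_eq_add_neg] using hf.add hg.neg

/-- By the ultrametric inequality, a coefficient `(f * g)_ν` of norm `≥ ε` forces `a + b = ν` with
`‖f_a‖ ≥ ε / B` and `‖g_b‖ ≥ ε / A`, where `A`, `B` bound the coefficients of `f`, `g`. -/
theorem IsTate.mul (hf : IsTate K s f) (hg : IsTate K s g) : IsTate K s (f * g) := by
  classical
  intro ε hε
  set A := max (gaussNorm K s f) 1
  set B := max (gaussNorm K s g) 1
  have hA : 0 < A := lt_max_of_lt_right one_pos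
  have hB : 0 < B := lt_max_of_lt_right one_pos
  have hfA : CoeffNormLE f A := hf.coeffNormLE_gaussNorm.mono (le_max_left _ _)
  have hgB : CoeffNormLE g B := hg.coeffNormLE_gaussNorm.mono (le_max_left _ _)
  refine ((hf _ (div_pos hε hB)).add (hg _ (div_pos hε hA))).subset fun ν hν => ?_
  have hν : ε ≤ ‖coeff ν (f * g)‖ := hν
  rw [coeff_mul] at hν
  obtain ⟨⟨a, b⟩, hab, hle⟩ := IsUltrametricDist.exists_norm_finsetSum_le_of_nonempty
    (⟨(0, ν), by simp⟩ : (Finset.HasAntidiagonal.antidiagonal ν).Nonempty)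
    fun p : (Fin s →₀ ℕ) × (Fin s →₀ ℕ) => coeff p.1 f * coeff p.2 g
  have hεab : ε ≤ ‖coeff a f‖ * ‖coeff b g‖ := (hν.trans hle).trans_eq (norm_mul _ _)
  refine ⟨a, ?_, b, ?_, Finset.HasAntidiagonal.mem_antidiagonal.1 hab⟩
  · change ε / B ≤ _
    rw [div_le_iff₀ hB]
    exact hεab.trans (mul_le_mul_of_nonneg_left (hgB b) (norm_nonneg _))
  · change ε / A ≤ _
    rw [div_le_iff₀ hA, mul_comm]
    exact hεab.trans (mul_le_mul_of_nonneg_right (hfA a) (norm_nonneg _))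

theorem gaussNorm_sub_le_max (hf : IsTate K s f) (hg : IsTate K s g) :
    gaussNorm K s (f - g) ≤ max (gaussNorm K s f) (gaussNorm K s g) :=
  gaussNorm_le (hf.coeffNormLE_gaussNorm.sub hg.coeffNormLE_gaussNorm)

/-- The ultrametric isosceles principle for the Gauss norm, at a constant. -/
theorem norm_eq_gaussNorm_of_gaussNorm_C_sub_lt {α : MvPowerSeries (Fin s) K} {x : K}
    (hα : IsTate K s α) (hx : gaussNorm K s (C x - α) < gaussNorm K s α) :
    ‖x‖ = gaussNorm K s α := by
  have hxα : IsTate K s (C x - α) := (isTate_C x).sub hα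
  have h₁ : ‖x‖ ≤ gaussNorm K s α := by
    have := gaussNorm_sub_le_max hα hxα.neg
    rwa [sub_neg_eq_add, add_sub_cancel, gaussNorm_C, gaussNorm_neg, max_eq_left hx.le] at this
  have h₂ : gaussNorm K s α ≤ max ‖x‖ (gaussNorm K s (C x - α)) := by
    simpa [gaussNorm_C] using gaussNorm_sub_le_max (isTate_C x) hxα
  exact h₁.antisymm ((le_max_iff.1 h₂).resolve_right hx.not_ge)

theorem exists_coeffNormLE_C_inv_mul_sub_one {α : MvPowerSeries (Fin s) K} {x : K}
    (hα : IsTate K s α) (hx : gaussNorm K s (C x - α) < gaussNorm K s α) :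
    ∃ θ < 1, CoeffNormLE (C x⁻¹ * α - 1) θ := by
  have hxα := norm_eq_gaussNorm_of_gaussNorm_C_sub_lt hα hx
  have hxpos : 0 < ‖x‖ := hxα ▸ (gaussNorm_nonneg _).trans_lt hx
  refine ⟨‖x⁻¹‖ * gaussNorm K s (C x - α), ?_, ?_⟩
  · rw [norm_inv, inv_mul_lt_one₀ hxpos]
    exact hxα ▸ hx
  · have : C x⁻¹ * α - 1 = C x⁻¹ * -(C x - α) := by
      rw [mul_neg, mul_sub, ← map_mul, inv_mul_cancel₀ (norm_pos_iff.1 hxpos), map_one]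
      ring
    rw [this]
    exact (coeffNormLE_C _).mul ((isTate_C x).sub hα).coeffNormLE_gaussNorm.neg

/-- Expand `u - 1 = -(v - 1) - (u - 1)(v - 1)` and absorb the last term, as `θ < 1`. -/
theorem coeffNormLE_sub_one_of_mul_eq_one {u v : MvPowerSeries (Fin s) K} {θ : ℝ}
    (hu : IsTate K s u) (huv : u * v = 1) (hv : CoeffNormLE (v - 1) θ) (hθ : θ < 1) :
    CoeffNormLE (u - 1) θ := by
  set δ := gaussNorm K s (u - 1)
  have hδ : CoeffNormLE (u - 1) δ := (hu.sub isTate_one).coeffNormLE_gaussNorm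
  have hδθ : δ ≤ max θ (δ * θ) := by
    refine gaussNorm_le ?_
    have : u - 1 = -(v - 1) - (u - 1) * (v - 1) := by linear_combination huv
    rw [this]
    exact hv.neg.sub (hδ.mul hv)
  refine hδ.mono ((le_max_iff.1 hδθ).elim id fun h => ?_)
  nlinarith [gaussNorm_nonneg (u - 1), hv.nonneg]

end Tate

section Twist

open MvPowerSeries (C coeff CoeffNormLE eq_of_forall_coeffNormLE_pow)

variable {K : Type} [NontriviallyNormedField K] {s q : ℕ} {τ : K →+* K}
  {f u v w w' : MvPowerSeries (Fin s) K} {a θ : ℝ}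

theorem coeff_twPS (f : MvPowerSeries (Fin s) K) (ν : Fin s →₀ ℕ) :
    coeff ν (twPS K s τ f) = τ (coeff ν f) :=
  MvPowerSeries.coeff_map _ _ _

theorem twPS_C (hτ : ∀ c, τ c = c ^ q) (c : K) : twPS K s τ (C c) = C (c ^ q) := by
  rw [twPS, MvPowerSeries.map_C, hτ]

theorem iterate_twPS_C (hτ : ∀ c, τ c = c ^ q) (c : K) (n : ℕ) :
    (⇑(twPS K s τ))^[n] (C c) = C (c ^ q ^ n) := by
  induction n with
  | zero => simp
  | succ n ih => rw [Function.iterate_succ_apply', ih, twPS_C hτ, ← pow_mul, ← pow_succ]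

theorem MvPowerSeries.CoeffNormLE.twist (hτ : ∀ c, ‖τ c‖ ≤ ‖c‖ ^ q) (hf : CoeffNormLE f a) :
    CoeffNormLE (twPS K s τ f) (a ^ q) := fun ν => by
  rw [coeff_twPS]
  exact (hτ _).trans (pow_le_pow_left₀ (norm_nonneg _) (hf ν) q)

theorem MvPowerSeries.CoeffNormLE.iterate_twist (hτ : ∀ c, ‖τ c‖ ≤ ‖c‖ ^ q)
    (hf : CoeffNormLE f a) (n : ℕ) : CoeffNormLE ((⇑(twPS K s τ))^[n] f) (a ^ q ^ n) := by
  induction n with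
  | zero => simpa using hf
  | succ n ih =>
    rw [Function.iterate_succ_apply', pow_succ, pow_mul]
    exact ih.twist hτ

theorem IsTate.twist (hq : 1 ≤ q) (hτ : ∀ c, ‖τ c‖ ≤ ‖c‖ ^ q) (hf : IsTate K s f) :
    IsTate K s (twPS K s τ f) := by
  intro ε hε
  refine (hf (min ε 1) (lt_min hε one_pos)).subset fun ν hν => ?_
  have hν : ε ≤ ‖coeff ν (twPS K s τ f)‖ := hν
  change min ε 1 ≤ ‖coeff ν f‖
  by_contra! hlt
  rw [coeff_twPS] at hν
  have := (hτ (coeff ν f)).trans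
    (pow_le_of_le_one (norm_nonneg _) (hlt.le.trans (min_le_right _ _)) (by omega))
  linarith [min_le_left ε 1]

theorem IsTate.iterate_twist (hq : 1 ≤ q) (hτ : ∀ c, ‖τ c‖ ≤ ‖c‖ ^ q) (hf : IsTate K s f)
    (n : ℕ) : IsTate K s ((⇑(twPS K s τ))^[n] f) := by
  induction n with
  | zero => exact hf
  | succ n ih =>
    rw [Function.iterate_succ_apply']
    exact ih.twist hq hτ

/-- For `u = x/α` these are the partial products `∏_{i<N} x^{q^i}/τ^i(α)`. -/
def twistProd (τ : K →+* K) (u : MvPowerSeries (Fin s) K) (N : ℕ) : MvPowerSeries (Fin s) K :=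
  ∏ i ∈ Finset.range N, (⇑(twPS K s τ))^[i] u

theorem twistProd_zero : twistProd τ u 0 = 1 := Finset.prod_range_zero _

theorem twistProd_succ (N : ℕ) :
    twistProd τ u (N + 1) = twistProd τ u N * (⇑(twPS K s τ))^[N] u :=
  Finset.prod_range_succ _ _

theorem twistProd_succ' (N : ℕ) :
    twistProd τ u (N + 1) = u * twPS K s τ (twistProd τ u N) := by
  rw [twistProd, Finset.prod_range_succ', twistProd, map_prod, mul_comm]
  simp only [Function.iterate_succ_apply', Function.iterate_zero_apply]

theorem twistProd_mul (N : ℕ) : twistProd τ u N * twistProd τ v N = twistProd τ (u * v) N := by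
  simp only [twistProd, ← Finset.prod_mul_distrib, iterate_map_mul]

theorem twistProd_one (N : ℕ) : twistProd τ (1 : MvPowerSeries (Fin s) K) N = 1 := by
  simp [twistProd, iterate_map_one]

theorem coeffNormLE_iterate_twist_sub_one (hτ : ∀ c, ‖τ c‖ ≤ ‖c‖ ^ q)
    (hu : CoeffNormLE (u - 1) θ) (n : ℕ) :
    CoeffNormLE ((⇑(twPS K s τ))^[n] u - 1) (θ ^ q ^ n) := by
  simpa [iterate_map_sub, iterate_map_one] using hu.iterate_twist hτ n

variable [IsUltrametricDist K]

theorem isTate_twistProd (hq : 1 ≤ q) (hτ : ∀ c, ‖τ c‖ ≤ ‖c‖ ^ q) (hu : IsTate K s u)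
    (N : ℕ) : IsTate K s (twistProd τ u N) := by
  induction N with
  | zero => simpa [twistProd_zero] using isTate_one
  | succ N ih =>
    rw [twistProd_succ]
    exact ih.mul (hu.iterate_twist hq hτ N)

theorem coeffNormLE_twistProd (hτ : ∀ c, ‖τ c‖ ≤ ‖c‖ ^ q) (hu : CoeffNormLE (u - 1) θ)
    (hθ : θ ≤ 1) (N : ℕ) : CoeffNormLE (twistProd τ u N) 1 := by
  induction N with
  | zero => simpa [twistProd_zero] using MvPowerSeries.coeffNormLE_one
  | succ N ih =>
    rw [twistProd_succ]
    simpa using ih.mul ((coeffNormLE_iterate_twist_sub_one hτ hu N).le_one_of_sub_one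
      (pow_le_one₀ hu.nonneg hθ))

/-- Since `q ≥ 2`, the `N`-th factor is within `θ ^ q ^ N ≤ θ ^ N` of `1`. -/
theorem coeffNormLE_twistProd_succ_sub (hq : 2 ≤ q) (hτ : ∀ c, ‖τ c‖ ≤ ‖c‖ ^ q)
    (hu : CoeffNormLE (u - 1) θ) (hθ : θ ≤ 1) (N : ℕ) :
    CoeffNormLE (twistProd τ u (N + 1) - twistProd τ u N) (θ ^ N) := by
  have h := (coeffNormLE_twistProd hτ hu hθ N).mul (coeffNormLE_iterate_twist_sub_one hτ hu N)
  rw [one_mul, mul_sub_one, ← twistProd_succ] at h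
  exact h.mono (pow_le_pow_of_le_one hu.nonneg hθ (Nat.lt_pow_self hq).le)

theorem exists_coeffNormLE_twistProd_sub [CompleteSpace K] (hq : 2 ≤ q)
    (hτ : ∀ c, ‖τ c‖ ≤ ‖c‖ ^ q) (hu : CoeffNormLE (u - 1) θ) (hθ : θ < 1) :
    ∃ w, ∀ N, CoeffNormLE (twistProd τ u N - w) (θ ^ N) :=
  MvPowerSeries.exists_coeffNormLE_sub_of_cauchy
    (tendsto_pow_atTop_nhds_zero_of_lt_one hu.nonneg hθ) fun _ _ hNm =>
      MvPowerSeries.coeffNormLE_sub_of_forall_succ (pow_right_anti₀ hu.nonneg hθ.le)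
        (coeffNormLE_twistProd_succ_sub hq hτ hu hθ.le) hNm

theorem IsTate.of_coeffNormLE_twistProd_sub (hq : 1 ≤ q) (hτ : ∀ c, ‖τ c‖ ≤ ‖c‖ ^ q)
    (hu : IsTate K s u) (hθ : θ < 1) (hw : ∀ N, CoeffNormLE (twistProd τ u N - w) (θ ^ N)) :
    IsTate K s w :=
  IsTate.of_forall_exists_coeffNormLE_sub fun _ hε =>
    let ⟨N, hN⟩ := exists_pow_lt_of_lt_one hε hθ
    ⟨_, isTate_twistProd hq hτ hu N, (hw N).sub_comm.mono hN.le⟩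

theorem mul_twist_eq_of_coeffNormLE_twistProd_sub (hq : 1 ≤ q) (hτ : ∀ c, ‖τ c‖ ≤ ‖c‖ ^ q)
    (hu : CoeffNormLE (u - 1) θ) (hθ : θ < 1)
    (hw : ∀ N, CoeffNormLE (twistProd τ u N - w) (θ ^ N)) : u * twPS K s τ w = w := by
  refine sub_eq_zero.1 (eq_of_forall_coeffNormLE_pow hθ fun N => ?_)
  have hθN : (θ ^ N) ^ q ≤ θ ^ N :=
    pow_le_of_le_one (pow_nonneg hu.nonneg N) (pow_le_one₀ hu.nonneg hθ.le) (by omega)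
  have hsplit : u * twPS K s τ w - w - 0 =
      u * twPS K s τ (w - twistProd τ u N) + (twistProd τ u (N + 1) - w) := by
    rw [twistProd_succ', map_sub]
    ring
  rw [hsplit]
  refine (((hu.le_one_of_sub_one hθ.le).mul ((hw N).sub_comm.twist hτ)).add (hw (N + 1))).mono ?_
  exact max_le (by simpa using hθN) (pow_le_pow_of_le_one hu.nonneg hθ.le N.le_succ)

theorem mul_eq_one_of_coeffNormLE_twistProd_sub (hτ : ∀ c, ‖τ c‖ ≤ ‖c‖ ^ q)
    (huv : u * v = 1) (hv : CoeffNormLE (v - 1) θ) (hθ : θ < 1)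
    (hw : ∀ N, CoeffNormLE (twistProd τ u N - w) (θ ^ N))
    (hw' : ∀ N, CoeffNormLE (twistProd τ v N - w') (θ ^ N)) : w * w' = 1 := by
  have hw1 : CoeffNormLE w 1 := by
    have := (hw 0).sub_comm
    rw [twistProd_zero, pow_zero] at this
    exact this.le_one_of_sub_one le_rfl
  refine sub_eq_zero.1 (eq_of_forall_coeffNormLE_pow hθ fun N => ?_)
  have hprod : twistProd τ u N * twistProd τ v N = 1 := by
    rw [twistProd_mul, huv, twistProd_one]
  have hsplit : w * w' - 1 - 0 =
      w * (w' - twistProd τ v N) + (w - twistProd τ u N) * twistProd τ v N := by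
    linear_combination hprod
  rw [hsplit]
  simpa using (hw1.mul (hw' N).sub_comm).add
    ((hw N).sub_comm.mul (coeffNormLE_twistProd hτ hv hθ.le N))

theorem exists_twistProd_limit [CompleteSpace K] (hq : 2 ≤ q) (hτ : ∀ c, ‖τ c‖ ≤ ‖c‖ ^ q)
    (hu : IsTate K s u) (hv : IsTate K s v) (huv : u * v = 1) (hu1 : CoeffNormLE (u - 1) θ)
    (hθ : θ < 1) :
    ∃ w, IsTate K s w ∧ (∃ w', IsTate K s w' ∧ w * w' = 1) ∧
      (∀ N, CoeffNormLE (twistProd τ u N - w) (θ ^ N)) ∧ u * twPS K s τ w = w := by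
  have hv1 := coeffNormLE_sub_one_of_mul_eq_one hv ((mul_comm v u).trans huv) hu1 hθ
  obtain ⟨w, hw⟩ := exists_coeffNormLE_twistProd_sub hq hτ hu1 hθ
  obtain ⟨w', hw'⟩ := exists_coeffNormLE_twistProd_sub hq hτ hv1 hθ
  exact ⟨w, hu.of_coeffNormLE_twistProd_sub (by omega) hτ hθ hw,
    ⟨w', hv.of_coeffNormLE_twistProd_sub (by omega) hτ hθ hw',
      mul_eq_one_of_coeffNormLE_twistProd_sub hτ huv hv1 hθ hw hw'⟩,
    hw, mul_twist_eq_of_coeffNormLE_twistProd_sub (by omega) hτ hu1 hθ hw⟩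

end Twist

open MvPowerSeries (C) in
theorem stmt1_general
    (K : Type) [NontriviallyNormedField K] [IsUltrametricDist K] [CompleteSpace K]
    (q : ℕ) (hq : IsPrimePow q)
    (τK : K ≃+* K) (hτK : ∀ x : K, τK x = x ^ q)
    (s : ℕ)
    (α β : MvPowerSeries (Fin s) K) (hα : IsTate K s α) (hβ : IsTate K s β)
    (hαβ : α * β = 1)
    (x : K)
    (hx : gaussNorm K s (MvPowerSeries.C (σ := Fin s) (R := K) x - α) < gaussNorm K s α) :
    ∃ w : MvPowerSeries (Fin s) K, IsTate K s w ∧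
      (∃ w' : MvPowerSeries (Fin s) K, IsTate K s w' ∧ w * w' = 1) ∧
      Filter.Tendsto (fun N : ℕ =>
          gaussNorm K s ((∏ i ∈ Finset.range N,
            (MvPowerSeries.C (σ := Fin s) (R := K) (x ^ q ^ i) *
              (⇑(twPS K s τK.toRingHom))^[i] β)) - w))
        Filter.atTop (nhds 0) ∧
      (∀ γ : K, γ ^ (q - 1) = x →
        twPS K s τK.toRingHom (MvPowerSeries.C (σ := Fin s) (R := K) γ * w)
          = α * (MvPowerSeries.C (σ := Fin s) (R := K) γ * w)) := by
  set τ := τK.toRingHom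
  have hq2 : 2 ≤ q := hq.two_le
  have hτ : ∀ c, ‖τ c‖ ≤ ‖c‖ ^ q := fun c => (norm_pow c q ▸ congrArg norm (hτK c)).le
  have hx0 : x ≠ 0 := norm_ne_zero_iff.1 <|
    (norm_eq_gaussNorm_of_gaussNorm_C_sub_lt hα hx).trans_ne ((gaussNorm_nonneg _).trans_lt hx).ne'
  have huv : (C x * β) * (C x⁻¹ * α) = 1 := by
    rw [mul_mul_mul_comm, ← map_mul, mul_inv_cancel₀ hx0, map_one, one_mul, mul_comm, hαβ]
  obtain ⟨θ, hθ, hv⟩ := exists_coeffNormLE_C_inv_mul_sub_one hα hx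
  obtain ⟨w, hwT, hunit, hw, hfix⟩ := exists_twistProd_limit hq2 hτ ((isTate_C x).mul hβ)
    ((isTate_C _).mul hα) huv (coeffNormLE_sub_one_of_mul_eq_one ((isTate_C x).mul hβ) huv hv hθ) hθ
  refine ⟨w, hwT, hunit, ?_, fun γ hγ => ?_⟩
  · have hprod (N : ℕ) : ∏ i ∈ Finset.range N, (C (x ^ q ^ i) * (⇑(twPS K s τ))^[i] β) =
        twistProd τ (C x * β) N :=
      Finset.prod_congr rfl fun i _ => by rw [iterate_map_mul, iterate_twPS_C hτK]
    simp_rw [hprod]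
    exact squeeze_zero (fun _ => gaussNorm_nonneg _) (fun N => gaussNorm_le (hw N))
      (tendsto_pow_atTop_nhds_zero_of_lt_one hv.nonneg hθ)
  · have hγq : γ ^ q = γ * x := by
      rw [← hγ, ← pow_succ', Nat.sub_add_cancel (by omega)]
    calc twPS K s τ (C γ * w) = C γ * (C x * twPS K s τ w) := by
          rw [map_mul, twPS_C hτK, hγq, map_mul, mul_assoc]
      _ = C γ * (α * (C x * β * twPS K s τ w)) := by
          linear_combination (-(C γ * C x * twPS K s τ w)) * hαβ
      _ = α * (C γ * w) := by rw [hfix, mul_left_comm]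

/-- for a unit `α` of `𝕋_s` and `x ∈ ℂ_∞^×` with `‖x - α‖_∞ < ‖α‖_∞`, the
product `∏_{i≥0} x^{q^i}/τ^i(α)` converges in `𝕋_s^×` (here `1/τ^i(α) = τ^i(β)` where `β`
is the inverse of `α` in `𝕋_s`), and for any `γ` with `γ^{q-1} = x` the element
`ω(α) = γ·∏ x^{q^i}/τ^i(α)` satisfies `τ(ω(α)) = α·ω(α)`. -/
theorem stmt1
    (K : Type) [NontriviallyNormedField K] [IsUltrametricDist K] [CompleteSpace K]
    (q : ℕ) (hq : IsPrimePow q)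
    (τK : K ≃+* K) (hτK : ∀ x : K, τK x = x ^ q)
    (s : ℕ)
    (α β : MvPowerSeries (Fin s) K) (hα : IsTate K s α) (hβ : IsTate K s β)
    (hαβ : α * β = 1)
    (x : K) (hx0 : x ≠ 0)
    (hx : gaussNorm K s (MvPowerSeries.C (σ := Fin s) (R := K) x - α) < gaussNorm K s α) :
    ∃ w : MvPowerSeries (Fin s) K, IsTate K s w ∧
      (∃ w' : MvPowerSeries (Fin s) K, IsTate K s w' ∧ w * w' = 1) ∧
      Filter.Tendsto (fun N : ℕ =>
          gaussNorm K s ((∏ i ∈ Finset.range N,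
            (MvPowerSeries.C (σ := Fin s) (R := K) (x ^ q ^ i) *
              (⇑(twPS K s τK.toRingHom))^[i] β)) - w))
        Filter.atTop (nhds 0) ∧
      (∀ γ : K, γ ^ (q - 1) = x →
        twPS K s τK.toRingHom (MvPowerSeries.C (σ := Fin s) (R := K) γ * w)
          = α * (MvPowerSeries.C (σ := Fin s) (R := K) γ * w)) :=
  stmt1_general K q hq τK hτK s α β hα hβ hαβ x hx
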